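/- arXiv:0707.3789 — 2 statements merged into one kernel-verified Lean document; each statement's English description precedes it below -/
import Mathlib

section
/- Monotonicity of guard values: if η is an initial segment of ξ and the guard φ has a defined value ⟦φ⟧_X^η, then ⟦φ⟧_X^ξ is defined and equal to ⟦φ⟧_X^η. -/
/-- ASM-terms over an internal vocabulary F and an external vocabulary E
(no variables); arities are not tracked, arguments are lists. -/
inductive Term (F E : Type*) : Type _
  | func : F → List (Term F E) → Term F E
  | ext  : E → List (Term F E) → Term F E

/-- Value relation ⟦t⟧_X^ξ = a, relative to a state `X` (interpretation of the
internal symbols), a template assignment `tmpl`, and the answer function `ans`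
of a history.  For an internal symbol the value is `X f` applied to the
argument values; for an external symbol it is the reply `ans (tmpl e as)`
to the query `tmpl e as` (the q-value), when that query is answered. -/
inductive Val {A Q F E : Type*} (X : F → List A → A) (tmpl : E → List A → Q)
    (ans : Q → Option A) : Term F E → A → Prop
  | func {f : F} {ts : List (Term F E)} {as : List A} :
      ts.length = as.length →
      (∀ p ∈ ts.zip as, Val X tmpl ans p.1 p.2) →
      Val X tmpl ans (.func f ts) (X f as)
  | ext {e : E} {ts : List (Term F E)} {as : List A} {a : A} :
      ts.length = as.length →
      (∀ p ∈ ts.zip as, Val X tmpl ans p.1 p.2) →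
      ans (tmpl e as) = some a →
      Val X tmpl ans (.ext e ts) a

/-- q-value of a query-term: q-⟦f(t₁,…,tₙ)⟧ = f̂[a₁,…,aₙ]. -/
inductive QVal {A Q F E : Type*} (X : F → List A → A) (tmpl : E → List A → Q)
    (ans : Q → Option A) : Term F E → Q → Prop
  | mk {e : E} {ts : List (Term F E)} {as : List A} :
      ts.length = as.length →
      (∀ p ∈ ts.zip as, Val X tmpl ans p.1 p.2) →
      QVal X tmpl ans (.ext e ts) (tmpl e as)

/-- Causality relation ξ ⊢_X^t q : the queries caused by a term.  When some
argument lacks a value, the queries are those caused by the arguments; when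
all arguments of an external call have values and the resulting query is
unanswered, that query is caused. -/
inductive Causes {A Q F E : Type*} (X : F → List A → A) (tmpl : E → List A → Q)
    (ans : Q → Option A) : Term F E → Q → Prop
  | funcArg {f ts t' q} : t' ∈ ts → Causes X tmpl ans t' q →
      Causes X tmpl ans (.func f ts) q
  | extArg {e ts t' q} : t' ∈ ts → Causes X tmpl ans t' q →
      Causes X tmpl ans (.ext e ts) q
  | extQ {e : E} {ts : List (Term F E)} {as : List A} :
      ts.length = as.length →
      (∀ p ∈ ts.zip as, Val X tmpl ans p.1 p.2) →
      ans (tmpl e as) = none →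
      Causes X tmpl ans (.ext e ts) (tmpl e as)

/-- A history: a partial answer function together with a binary relation
(intended: a linear pre-order of its domain). -/
structure Hist (A Q : Type*) where
  ans : Q → Option A
  le : Q → Q → Prop

/-- ξ is a genuine history: `le` is a linear pre-order whose field is the
domain of the answer function. -/
def IsHistory {A Q : Type*} (ξ : Hist A Q) : Prop :=
  (∀ x y, ξ.le x y → ξ.ans x ≠ none ∧ ξ.ans y ≠ none) ∧
  (∀ x, ξ.ans x ≠ none → ξ.le x x) ∧
  (∀ x y z, ξ.le x y → ξ.le y z → ξ.le x z) ∧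
  (∀ x y, ξ.ans x ≠ none → ξ.ans y ≠ none → ξ.le x y ∨ ξ.le y x)

/-- η ⊴ ξ : η is the restriction of ξ to a downward-closed subset of dom ξ̇. -/
def InitSeg {A Q : Type*} (η ξ : Hist A Q) : Prop :=
  (∀ x, η.ans x ≠ none → η.ans x = ξ.ans x) ∧
  (∀ x y, ξ.le x y → η.ans y ≠ none → η.ans x ≠ none) ∧
  (∀ x y, η.le x y ↔ (ξ.le x y ∧ η.ans x ≠ none ∧ η.ans y ≠ none))

/-- t has a defined value. -/
def HasVal {A Q F E : Type*} (X : F → List A → A) (tmpl : E → List A → Q)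
    (ans : Q → Option A) (t : Term F E) : Prop :=
  ∃ a, Val X tmpl ans t a

/-- Guards: Boolean terms, timing comparisons (s ⪯ t), and the Kleene
connectives ⋏, ⋎, ¬. -/
inductive Guard (F E : Type*) : Type _
  | tm : Term F E → Guard F E
  | timing : Term F E → Term F E → Guard F E
  | kand : Guard F E → Guard F E → Guard F E
  | kor : Guard F E → Guard F E → Guard F E
  | knot : Guard F E → Guard F E

/-- A Boolean term: its value (under any history) is always one of the two
designated truth elements. -/
def IsBooleanTerm {A Q F E : Type*} (X : F → List A → A) (tmpl : E → List A → Q)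
    (tval fval : A) (t : Term F E) : Prop :=
  ∀ (ans : Q → Option A) (a : A), Val X tmpl ans t a → a = tval ∨ a = fval

/-- A guard all of whose atomic term constituents are Boolean terms. -/
inductive GoodGuard {A Q F E : Type*} (X : F → List A → A) (tmpl : E → List A → Q)
    (tval fval : A) : Guard F E → Prop
  | tm {t} : IsBooleanTerm X tmpl tval fval t → GoodGuard X tmpl tval fval (.tm t)
  | timing {s t} : GoodGuard X tmpl tval fval (.timing s t)
  | kand {φ ψ} : GoodGuard X tmpl tval fval φ → GoodGuard X tmpl tval fval ψ →
      GoodGuard X tmpl tval fval (.kand φ ψ)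
  | kor {φ ψ} : GoodGuard X tmpl tval fval φ → GoodGuard X tmpl tval fval ψ →
      GoodGuard X tmpl tval fval (.kor φ ψ)
  | knot {φ} : GoodGuard X tmpl tval fval φ → GoodGuard X tmpl tval fval (.knot φ)

/-- Truth-value semantics of guards ⟦φ⟧_X^ξ, in Kleene's strong
three-valued logic; a timing guard (s ⪯ t) is true if s has a value and t
does not, or if both have values and every initial segment giving t a value
also gives s one; dually for falsity. -/
inductive GVal {A Q F E : Type*} (X : F → List A → A) (tmpl : E → List A → Q)
    (tval fval : A) (ξ : Hist A Q) : Guard F E → Bool → Prop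
  | tmT {t} : Val X tmpl ξ.ans t tval → GVal X tmpl tval fval ξ (.tm t) true
  | tmF {t} : Val X tmpl ξ.ans t fval → GVal X tmpl tval fval ξ (.tm t) false
  | timingT₁ {s t} : HasVal X tmpl ξ.ans s → ¬ HasVal X tmpl ξ.ans t →
      GVal X tmpl tval fval ξ (.timing s t) true
  | timingT₂ {s t} : HasVal X tmpl ξ.ans s → HasVal X tmpl ξ.ans t →
      (∀ η, IsHistory η → InitSeg η ξ → HasVal X tmpl η.ans t → HasVal X tmpl η.ans s) →
      GVal X tmpl tval fval ξ (.timing s t) true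
  | timingF₁ {s t} : HasVal X tmpl ξ.ans t → ¬ HasVal X tmpl ξ.ans s →
      GVal X tmpl tval fval ξ (.timing s t) false
  | timingF₂ {s t} : HasVal X tmpl ξ.ans s → HasVal X tmpl ξ.ans t →
      (∃ η, IsHistory η ∧ InitSeg η ξ ∧ HasVal X tmpl η.ans t ∧ ¬ HasVal X tmpl η.ans s) →
      GVal X tmpl tval fval ξ (.timing s t) false
  | kandT {φ ψ} : GVal X tmpl tval fval ξ φ true → GVal X tmpl tval fval ξ ψ true →
      GVal X tmpl tval fval ξ (.kand φ ψ) true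
  | kandF₀ {φ ψ} : GVal X tmpl tval fval ξ φ false → GVal X tmpl tval fval ξ (.kand φ ψ) false
  | kandF₁ {φ ψ} : GVal X tmpl tval fval ξ ψ false → GVal X tmpl tval fval ξ (.kand φ ψ) false
  | korF {φ ψ} : GVal X tmpl tval fval ξ φ false → GVal X tmpl tval fval ξ ψ false →
      GVal X tmpl tval fval ξ (.kor φ ψ) false
  | korT₀ {φ ψ} : GVal X tmpl tval fval ξ φ true → GVal X tmpl tval fval ξ (.kor φ ψ) true
  | korT₁ {φ ψ} : GVal X tmpl tval fval ξ ψ true → GVal X tmpl tval fval ξ (.kor φ ψ) true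
  | knot {φ b} : GVal X tmpl tval fval ξ φ b → GVal X tmpl tval fval ξ (.knot φ) (!b)

/-- Queries caused by a guard, ξ ⊢_X^φ q. -/
inductive GCauses {A Q F E : Type*} (X : F → List A → A) (tmpl : E → List A → Q)
    (tval fval : A) (ξ : Hist A Q) : Guard F E → Q → Prop
  | tm {t q} : Causes X tmpl ξ.ans t q → GCauses X tmpl tval fval ξ (.tm t) q
  | timingL {s t q} : ¬ HasVal X tmpl ξ.ans s → ¬ HasVal X tmpl ξ.ans t →
      Causes X tmpl ξ.ans s q → GCauses X tmpl tval fval ξ (.timing s t) q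
  | timingR {s t q} : ¬ HasVal X tmpl ξ.ans s → ¬ HasVal X tmpl ξ.ans t →
      Causes X tmpl ξ.ans t q → GCauses X tmpl tval fval ξ (.timing s t) q
  | kand₁ {φ ψ q} : GVal X tmpl tval fval ξ φ true → (¬ ∃ b, GVal X tmpl tval fval ξ ψ b) →
      GCauses X tmpl tval fval ξ ψ q → GCauses X tmpl tval fval ξ (.kand φ ψ) q
  | kand₂ {φ ψ q} : GVal X tmpl tval fval ξ ψ true → (¬ ∃ b, GVal X tmpl tval fval ξ φ b) →
      GCauses X tmpl tval fval ξ φ q → GCauses X tmpl tval fval ξ (.kand φ ψ) q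
  | kand₃l {φ ψ q} : (¬ ∃ b, GVal X tmpl tval fval ξ φ b) → (¬ ∃ b, GVal X tmpl tval fval ξ ψ b) →
      GCauses X tmpl tval fval ξ φ q → GCauses X tmpl tval fval ξ (.kand φ ψ) q
  | kand₃r {φ ψ q} : (¬ ∃ b, GVal X tmpl tval fval ξ φ b) → (¬ ∃ b, GVal X tmpl tval fval ξ ψ b) →
      GCauses X tmpl tval fval ξ ψ q → GCauses X tmpl tval fval ξ (.kand φ ψ) q
  | kor₁ {φ ψ q} : GVal X tmpl tval fval ξ φ false → (¬ ∃ b, GVal X tmpl tval fval ξ ψ b) →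
      GCauses X tmpl tval fval ξ ψ q → GCauses X tmpl tval fval ξ (.kor φ ψ) q
  | kor₂ {φ ψ q} : GVal X tmpl tval fval ξ ψ false → (¬ ∃ b, GVal X tmpl tval fval ξ φ b) →
      GCauses X tmpl tval fval ξ φ q → GCauses X tmpl tval fval ξ (.kor φ ψ) q
  | kor₃l {φ ψ q} : (¬ ∃ b, GVal X tmpl tval fval ξ φ b) → (¬ ∃ b, GVal X tmpl tval fval ξ ψ b) →
      GCauses X tmpl tval fval ξ φ q → GCauses X tmpl tval fval ξ (.kor φ ψ) q
  | kor₃r {φ ψ q} : (¬ ∃ b, GVal X tmpl tval fval ξ φ b) → (¬ ∃ b, GVal X tmpl tval fval ξ ψ b) →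
      GCauses X tmpl tval fval ξ ψ q → GCauses X tmpl tval fval ξ (.kor φ ψ) q
  | knot {φ q} : (¬ ∃ b, GVal X tmpl tval fval ξ φ b) →
      GCauses X tmpl tval fval ξ φ q → GCauses X tmpl tval fval ξ (.knot φ) q


/- Values of terms only grow along initial segments, which settles Boolean atoms and the Kleene
connectives. For a timing guard (s ⪯ t) the only new ingredient is that the initial segments of a
history are linearly ordered by ⊴: an initial segment η' of ξ either lies below η, where the
hypothesis on η applies, or above it, where the values already present in η survive. -/

namespace InitSeg

variable {A Q : Type*} {η η' ξ : Hist A Q}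

theorem ans_ne_none (hseg : InitSeg η ξ) {x : Q} (hx : η.ans x ≠ none) : ξ.ans x ≠ none := by
  rwa [← hseg.1 x hx]

theorem val {F E : Type*} {X : F → List A → A} {tmpl : E → List A → Q}
    (hseg : InitSeg η ξ) {t : Term F E} {a : A} (h : Val X tmpl η.ans t a) :
    Val X tmpl ξ.ans t a := by
  induction h with
  | func hl _ ih => exact .func hl ih
  | ext hl _ hans ih => exact .ext hl ih (by rw [← hseg.1 _ (by simp [hans]), hans])

theorem hasVal {F E : Type*} {X : F → List A → A} {tmpl : E → List A → Q}
    (hseg : InitSeg η ξ) {t : Term F E} (h : HasVal X tmpl η.ans t) : HasVal X tmpl ξ.ans t :=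
  let ⟨a, ha⟩ := h
  ⟨a, hseg.val ha⟩

theorem of_ans_ne_none (h : InitSeg η ξ) (h' : InitSeg η' ξ)
    (hsub : ∀ x, η.ans x ≠ none → η'.ans x ≠ none) : InitSeg η η' := by
  refine ⟨fun x hx => ?_, fun x y hxy hy => h.2.1 x y ((h'.2.2 x y).1 hxy).1 hy, fun x y => ?_⟩
  · rw [h.1 x hx, h'.1 x (hsub x hx)]
  · rw [h.2.2 x y, h'.2.2 x y]
    constructor
    · rintro ⟨hle, hx, hy⟩
      exact ⟨⟨hle, hsub x hx, hsub y hy⟩, hx, hy⟩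
    · rintro ⟨⟨hle, -, -⟩, hx, hy⟩
      exact ⟨hle, hx, hy⟩

theorem total (hξ : IsHistory ξ) (h : InitSeg η ξ) (h' : InitSeg η' ξ) :
    InitSeg η η' ∨ InitSeg η' η := by
  by_cases hsub : ∀ x, η.ans x ≠ none → η'.ans x ≠ none
  · exact .inl (h.of_ans_ne_none h' hsub)
  · push Not at hsub
    obtain ⟨x, hx, hx'⟩ := hsub
    refine .inr (h'.of_ans_ne_none h fun y hy => ?_)
    rcases hξ.2.2.2 x y (h.ans_ne_none hx) (h'.ans_ne_none hy) with hxy | hyx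
    · exact absurd (h'.2.1 x y hxy hy) (not_not.2 hx')
    · exact h.2.1 y x hyx hx

theorem trans (h : InitSeg η η') (h' : InitSeg η' ξ) : InitSeg η ξ := by
  refine ⟨fun x hx => ?_, fun x y hxy hy => ?_, fun x y => ?_⟩
  · rw [h.1 x hx, h'.1 x (h.ans_ne_none hx)]
  · have hy' := h.ans_ne_none hy
    exact h.2.1 x y ((h'.2.2 x y).2 ⟨hxy, h'.2.1 x y hxy hy', hy'⟩) hy
  · rw [h.2.2 x y, h'.2.2 x y]
    constructor
    · rintro ⟨⟨hle, -, -⟩, hx, hy⟩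
      exact ⟨hle, hx, hy⟩
    · rintro ⟨hle, hx, hy⟩
      exact ⟨⟨hle, h.ans_ne_none hx, h.ans_ne_none hy⟩, hx, hy⟩

end InitSeg

section TimingGuard

variable {A Q F E : Type*} {X : F → List A → A} {tmpl : E → List A → Q} {tval fval : A}
  {η ξ : Hist A Q} {s t : Term F E}

theorem GVal.timing_true_mono (hξ : IsHistory ξ) (hseg : InitSeg η ξ)
    (hs : HasVal X tmpl η.ans s)
    (hst : ∀ η', IsHistory η' → InitSeg η' η → HasVal X tmpl η'.ans t → HasVal X tmpl η'.ans s) :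
    GVal X tmpl tval fval ξ (.timing s t) true := by
  by_cases ht : HasVal X tmpl ξ.ans t
  · refine .timingT₂ (hseg.hasVal hs) ht fun η' hη' hseg' ht' => ?_
    rcases hseg'.total hξ hseg with h | h
    · exact hst η' hη' h ht'
    · exact h.hasVal hs
  · exact .timingT₁ (hseg.hasVal hs) ht

theorem GVal.timing_false_mono (hseg : InitSeg η ξ) (hs : HasVal X tmpl ξ.ans s)
    (ht : HasVal X tmpl η.ans t)
    (hst : ∃ η', IsHistory η' ∧ InitSeg η' η ∧ HasVal X tmpl η'.ans t ∧ ¬ HasVal X tmpl η'.ans s) :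
    GVal X tmpl tval fval ξ (.timing s t) false :=
  let ⟨η', hη', hseg', ht', hs'⟩ := hst
  .timingF₂ hs (hseg.hasVal ht) ⟨η', hη', hseg'.trans hseg, ht', hs'⟩

end TimingGuard

theorem stmt8_general {A Q F E : Type*} (X : F → List A → A) (tmpl : E → List A → Q)
    (tval fval : A)
    (η ξ : Hist A Q) (hη : IsHistory η) (hξ : IsHistory ξ) (hseg : InitSeg η ξ)
    (φ : Guard F E) (b : Bool) :
    GVal X tmpl tval fval η φ b → GVal X tmpl tval fval ξ φ b := by
  intro h
  induction h with
  | tmT ht => exact .tmT (hseg.val ht)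
  | tmF ht => exact .tmF (hseg.val ht)
  | timingT₁ hs ht =>
      exact GVal.timing_true_mono hξ hseg hs fun η' _ hseg' ht' => absurd (hseg'.hasVal ht') ht
  | timingT₂ hs _ hst => exact GVal.timing_true_mono hξ hseg hs hst
  | @timingF₁ s t ht hs =>
      by_cases hs' : HasVal X tmpl ξ.ans s
      · exact .timingF₂ hs' (hseg.hasVal ht) ⟨η, hη, hseg, ht, hs⟩
      · exact .timingF₁ (hseg.hasVal ht) hs'
  | timingF₂ hs ht hst => exact GVal.timing_false_mono hseg (hseg.hasVal hs) ht hst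
  | kandT _ _ ih₁ ih₂ => exact .kandT ih₁ ih₂
  | kandF₀ _ ih => exact .kandF₀ ih
  | kandF₁ _ ih => exact .kandF₁ ih
  | korF _ _ ih₁ ih₂ => exact .korF ih₁ ih₂
  | korT₀ _ ih => exact .korT₀ ih
  | korT₁ _ ih => exact .korT₁ ih
  | knot _ ih => exact .knot ih

/-- monotonicity of guard values: if η ⊴ ξ and ⟦φ⟧_X^η is
defined, then ⟦φ⟧_X^ξ is defined and equal to it. -/
theorem stmt8 {A Q F E : Type*} (X : F → List A → A) (tmpl : E → List A → Q)
    (tval fval : A) (htf : tval ≠ fval)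
    (η ξ : Hist A Q) (hη : IsHistory η) (hξ : IsHistory ξ) (hseg : InitSeg η ξ)
    (φ : Guard F E) (hφ : GoodGuard X tmpl tval fval φ) (b : Bool) :
    GVal X tmpl tval fval η φ b → GVal X tmpl tval fval ξ φ b :=
  stmt8_general X tmpl tval fval η ξ hη hξ hseg φ b
end

section
/- Bounded queries: for every ASM-term t there is a natural number B(t), depending only on t, such that for every state X and history ξ, the number of distinct queries caused by initial segments of ξ for t is at most B(t); one may take B(f(t₁,…,tₙ)) = 1 + ∑ᵢ B(tᵢ). -/
/-!
Induction on `t`. Every query caused for `f(t₁,…,tₙ)` is caused for some `tᵢ`, except when `f`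
is external and all arguments have values in `η`: then the query is `f̂[a₁,…,aₙ]`. Values of
terms persist from an initial segment `η` to `ξ` and are unique, so `a₁,…,aₙ` are the argument
values in `ξ` itself, and at most one such query arises, whatever `η` is.
-/

def Term.bound {F E : Type*} : Term F E → ℕ
  | .func _ ts => 1 + (ts.map bound).sum
  | .ext _ ts => 1 + (ts.map bound).sum

@[induction_eliminator]
theorem Term.induction {F E : Type*} {motive : Term F E → Prop}
    (func : ∀ f ts, (∀ t ∈ ts, motive t) → motive (.func f ts))
    (ext : ∀ e ts, (∀ t ∈ ts, motive t) → motive (.ext e ts)) : ∀ t, motive t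
  | .func f ts => func f ts fun t _ => Term.induction func ext t
  | .ext e ts => ext e ts fun t _ => Term.induction func ext t

theorem List.eq_of_forall_mem_zip_unique {α β : Type*} {R : α → β → Prop} :
    ∀ {l : List α} {bs bs' : List β}, l.length = bs.length → l.length = bs'.length →
      (∀ p ∈ l.zip bs, ∀ b, R p.1 b → p.2 = b) → (∀ p ∈ l.zip bs', R p.1 p.2) → bs = bs'
  | [], [], [], _, _, _, _ => rfl
  | a :: l, b :: bs, b' :: bs', hl, hl', huniq, hR => by
    simp only [List.zip_cons_cons, List.mem_cons, forall_eq_or_imp] at huniq hR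
    rw [huniq.1 b' hR.1, eq_of_forall_mem_zip_unique (by simpa using hl) (by simpa using hl')
      huniq.2 hR.2]

theorem Set.ncard_biUnion_list_le {α ι : Type*} (S : ι → Set α) :
    ∀ l : List ι, (⋃ i ∈ l, S i).ncard ≤ (l.map fun i => (S i).ncard).sum
  | [] => by simp
  | i :: l => by
    have hcons : (⋃ j ∈ i :: l, S j) = S i ∪ ⋃ j ∈ l, S j := by
      simp only [List.mem_cons, Set.iUnion_or, Set.iUnion_union_distrib,
        Set.iUnion_iUnion_eq_left]
    rw [hcons, List.map_cons, List.sum_cons]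
    exact (Set.ncard_union_le _ _).trans (Nat.add_le_add_left (ncard_biUnion_list_le S l) _)

section Semantics

variable {A Q F E : Type*} {X : F → List A → A} {tmpl : E → List A → Q}

theorem Val.mono {ans ans' : Q → Option A} (h : ∀ x a, ans x = some a → ans' x = some a)
    {t : Term F E} {a : A} (hv : Val X tmpl ans t a) : Val X tmpl ans' t a := by
  induction hv with
  | func hlen _ ih => exact .func hlen ih
  | ext hlen _ ha ih => exact .ext hlen ih (h _ _ ha)

theorem Val.unique {ans : Q → Option A} {t : Term F E} {a a' : A}
    (hv : Val X tmpl ans t a) (hv' : Val X tmpl ans t a') : a = a' := by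
  induction hv generalizing a' with
  | func hlen _ ih =>
    cases hv' with
    | func hlen' hvals' =>
      rw [List.eq_of_forall_mem_zip_unique hlen hlen' (fun p hp _ h => ih p hp h) hvals']
  | ext hlen _ ha ih =>
    cases hv' with
    | ext hlen' hvals' ha' =>
      rw [List.eq_of_forall_mem_zip_unique hlen hlen' (fun p hp _ h => ih p hp h) hvals', ha']
        at ha
      exact Option.some_injective _ ha.symm

theorem QVal.subsingleton (ans : Q → Option A) (t : Term F E) :
    {q | QVal X tmpl ans t q}.Subsingleton := by
  rintro _ ⟨hlen, hvals⟩ _ ⟨hlen', hvals'⟩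
  rw [List.eq_of_forall_mem_zip_unique hlen hlen' (fun p hp _ h => (hvals p hp).unique h)
    hvals']

theorem InitSeg.ans_eq_some {η ξ : Hist A Q} (h : InitSeg η ξ) {x : Q} {a : A}
    (hx : η.ans x = some a) : ξ.ans x = some a := by
  rw [← h.1 x (by simp [hx]), hx]

def causedQueries (X : F → List A → A) (tmpl : E → List A → Q) (ξ : Hist A Q) (t : Term F E) :
    Set Q :=
  {q | ∃ η, IsHistory η ∧ InitSeg η ξ ∧ Causes X tmpl η.ans t q}

variable {ξ : Hist A Q}

theorem causedQueries_func (f : F) (ts : List (Term F E)) :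
    causedQueries X tmpl ξ (.func f ts) = ⋃ t ∈ ts, causedQueries X tmpl ξ t := by
  ext q
  simp only [causedQueries, Set.mem_ofPred_eq, Set.mem_iUnion]
  constructor
  · rintro ⟨η, hη, hseg, ⟨ht, hc⟩⟩
    exact ⟨_, ht, η, hη, hseg, hc⟩
  · rintro ⟨t, ht, η, hη, hseg, hc⟩
    exact ⟨η, hη, hseg, .funcArg ht hc⟩

theorem causedQueries_ext_subset (e : E) (ts : List (Term F E)) :
    causedQueries X tmpl ξ (.ext e ts) ⊆
      (⋃ t ∈ ts, causedQueries X tmpl ξ t) ∪ {q | QVal X tmpl ξ.ans (.ext e ts) q} := by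
  rintro q ⟨η, hη, hseg, hc⟩
  cases hc with
  | extArg ht hc => exact .inl (Set.mem_biUnion ht ⟨η, hη, hseg, hc⟩)
  | extQ hlen hvals _ =>
    exact .inr (.mk hlen fun p hp => (hvals p hp).mono fun _ _ => hseg.ans_eq_some)

theorem causedQueries_finite (t : Term F E) : (causedQueries X tmpl ξ t).Finite := by
  induction t with
  | func f ts ih =>
    rw [causedQueries_func]
    exact (List.finite_toSet ts).biUnion ih
  | ext e ts ih =>
    exact (((List.finite_toSet ts).biUnion ih).union (QVal.subsingleton _ _).finite).subset
      (causedQueries_ext_subset e ts)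

theorem ncard_causedQueries_le_bound (t : Term F E) :
    (causedQueries X tmpl ξ t).ncard ≤ t.bound := by
  induction t with
  | func f ts ih =>
    rw [causedQueries_func, Term.bound]
    calc _ ≤ _ := Set.ncard_biUnion_list_le _ ts
      _ ≤ (ts.map Term.bound).sum := List.sum_le_sum ih
      _ ≤ _ := Nat.le_add_left _ _
  | ext e ts ih =>
    have hqval := QVal.subsingleton (X := X) (tmpl := tmpl) ξ.ans (.ext e ts)
    have hargs := (List.finite_toSet ts).biUnion fun t _ =>
      causedQueries_finite (X := X) (tmpl := tmpl) (ξ := ξ) t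
    calc (causedQueries X tmpl ξ (.ext e ts)).ncard
        ≤ (_ ∪ _ : Set Q).ncard := Set.ncard_le_ncard (causedQueries_ext_subset e ts)
          (hargs.union hqval.finite)
      _ ≤ (ts.map Term.bound).sum + 1 :=
          (Set.ncard_union_le _ _).trans <| Nat.add_le_add
            ((Set.ncard_biUnion_list_le _ ts).trans (List.sum_le_sum ih))
            ((Set.ncard_le_one hqval.finite).mpr fun _ ha _ hb => hqval ha hb)
      _ = Term.bound (.ext e ts) := by rw [Term.bound, Nat.add_comm]

end Semantics

/-- for every ASM-term t there is a bound B(t), depending only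
on t, on the number of distinct queries caused for t by initial segments of
any history ξ in any state X; one may take B(f(t₁,…,tₙ)) = 1 + ∑ᵢ B(tᵢ). -/
theorem stmt13 {A Q F E : Type*} :
    ∃ B : Term F E → ℕ,
      (∀ (f : F) (ts : List (Term F E)), B (.func f ts) = 1 + (ts.map B).sum) ∧
      (∀ (e : E) (ts : List (Term F E)), B (.ext e ts) = 1 + (ts.map B).sum) ∧
      (∀ (X : F → List A → A) (tmpl : E → List A → Q) (ξ : Hist A Q),
        IsHistory ξ → ∀ t : Term F E,
          {q | ∃ η, IsHistory η ∧ InitSeg η ξ ∧ Causes X tmpl η.ans t q}.Finite ∧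
          {q | ∃ η, IsHistory η ∧ InitSeg η ξ ∧ Causes X tmpl η.ans t q}.ncard ≤ B t) :=
  ⟨Term.bound, fun _ _ => by rw [Term.bound], fun _ _ => by rw [Term.bound],
    fun _ _ _ _ t => ⟨causedQueries_finite t, ncard_causedQueries_le_bound t⟩⟩
end
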